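/- Let r ≥ 1 and let W be a ℂ-subspace of R^r with W ⊆ q⁻¹·P^r for a nonzero polynomial q. If p₁ and p₂ are nonzero polynomials with p₁·P^r ⊆ W and p₂·P^r ⊆ W, then the quotients W ⧸ p₁·P^r and W ⧸ p₂·P^r are finite-dimensional and finrank ℂ (W ⧸ p₁·P^r) − r·natDegree p₁ = finrank ℂ (W ⧸ p₂·P^r) − r·natDegree p₂; that is, the virtual dimension of W does not depend on the choice of p. -/

import Mathlib

open Polynomial

/-- The componentwise embedding `P^r → R^r` of tuples of polynomials into
tuples of rational functions. -/
noncomputable def polyToRat (r : ℕ) :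
    (Fin r → Polynomial ℂ) →ₗ[ℂ] (Fin r → RatFunc ℂ) :=
  LinearMap.pi fun k =>
    (IsScalarTower.toAlgHom ℂ (Polynomial ℂ) (RatFunc ℂ)).toLinearMap ∘ₗ
      LinearMap.proj k

/-- Componentwise multiplication by a fixed rational function `f` on `R^r`. -/
noncomputable def ratScale (r : ℕ) (f : RatFunc ℂ) :
    (Fin r → RatFunc ℂ) →ₗ[ℂ] (Fin r → RatFunc ℂ) :=
  LinearMap.pi fun k => LinearMap.mulLeft ℂ f ∘ₗ LinearMap.proj k

/-- `P^r` regarded as a subspace of `R^r`. -/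
noncomputable def polySubmodule (r : ℕ) : Submodule ℂ (Fin r → RatFunc ℂ) :=
  LinearMap.range (polyToRat r)

/-- The image `f·U` of a subspace `U ⊆ R^r` under componentwise
multiplication by the rational function `f`. -/
noncomputable def scaleSub (r : ℕ) (f : RatFunc ℂ)
    (U : Submodule ℂ (Fin r → RatFunc ℂ)) : Submodule ℂ (Fin r → RatFunc ℂ) :=
  Submodule.map (ratScale r f) U

/-!
Multiplication by a nonzero rational function is a linear automorphism of `R^r`, so
`a·P^r ⧸ (a c)·P^r ≅ P^r ⧸ c·P^r ≅ (ℂ[X] ⧸ (c))^r` has dimension `r · deg c`.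
Since `W ⊆ q⁻¹·P^r`, the quotient `W ⧸ p·P^r` embeds into
`q⁻¹·P^r ⧸ p·P^r ≅ P^r ⧸ (q p)·P^r` and is finite-dimensional. Additivity of dimension
along `(p c)·P^r ⊆ p·P^r ⊆ W` then gives `vdim_{p c} W = vdim_p W`, whence
`vdim_{p₁} W = vdim_{p₁ p₂} W = vdim_{p₂} W`.
-/

open Module Submodule

section Subquotient

variable {R K M N : Type*} [Ring R] [AddCommGroup M] [Module R M] [AddCommGroup N] [Module R N]

lemma Submodule.comap_subtype_le_comap_inclusion (C : Submodule R M) {B W : Submodule R M}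
    (h : B ≤ W) :
    comap B.subtype C ≤ comap (inclusion h) (comap W.subtype C) := by
  rw [← comap_comp, subtype_comp_inclusion]

lemma Submodule.mapQ_inclusion_injective (C : Submodule R M) {B W : Submodule R M} (h : B ≤ W) :
    Function.Injective (mapQ (comap B.subtype C) (comap W.subtype C) (inclusion h)
      (comap_subtype_le_comap_inclusion C h)) := by
  rw [← LinearMap.ker_eq_bot, ker_mapQ, eq_bot_iff]
  rintro _ ⟨x, hx, rfl⟩
  exact (Quotient.mk_eq_zero _).2 hx

noncomputable def Submodule.subquotientMapEquiv (e : M ≃ₗ[R] N) (B C : Submodule R M) :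
    (B ⧸ comap B.subtype C) ≃ₗ[R]
      (B.map (e : M →ₗ[R] N) ⧸
        comap (B.map (e : M →ₗ[R] N)).subtype (C.map (e : M →ₗ[R] N))) :=
  Quotient.equiv _ _ (e.submoduleMap B) <| by
    ext ⟨_, x, hx, rfl⟩
    simp

variable [DivisionRing K] [Module K M]

theorem Submodule.finrank_subquotient_add {C B W : Submodule K M} (hCB : C ≤ B) (hBW : B ≤ W)
    [FiniteDimensional K (W ⧸ comap W.subtype C)] :
    finrank K (W ⧸ comap W.subtype C) =
      finrank K (W ⧸ comap W.subtype B) + finrank K (B ⧸ comap B.subtype C) := by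
  set f := mapQ _ _ (inclusion hBW) (comap_subtype_le_comap_inclusion C hBW)
  set g := factor (comap_mono (f := W.subtype) hCB)
  have hexact : LinearMap.range f = LinearMap.ker g := by
    simp [f, g, factor, ker_mapQ, range_mapQ, range_inclusion]
  rw [← g.finrank_range_add_finrank_ker, LinearMap.range_eq_top.2 (factor_surjective _),
    finrank_top, ← hexact, LinearMap.finrank_range_of_inj (mapQ_inclusion_injective C hBW)]

end Subquotient

noncomputable abbrev scaledPolySubmodule (r : ℕ) (c : ℂ[X]) :
    Submodule ℂ (Fin r → RatFunc ℂ) :=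
  scaleSub r (algebraMap ℂ[X] (RatFunc ℂ) c) (polySubmodule r)

lemma ratScale_mul (r : ℕ) (f g : RatFunc ℂ) :
    ratScale r (f * g) = ratScale r f ∘ₗ ratScale r g :=
  LinearMap.ext fun v => funext fun k => mul_assoc f g (v k)

lemma ratScale_one (r : ℕ) : ratScale r 1 = LinearMap.id :=
  LinearMap.ext fun v => funext fun k => one_mul (v k)

noncomputable def ratScaleEquiv (r : ℕ) {f : RatFunc ℂ} (hf : f ≠ 0) :
    (Fin r → RatFunc ℂ) ≃ₗ[ℂ] (Fin r → RatFunc ℂ) :=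
  .ofLinearMap (ratScale r f) (ratScale r f⁻¹)
    (by rw [← ratScale_mul, mul_inv_cancel₀ hf, ratScale_one])
    (by rw [← ratScale_mul, inv_mul_cancel₀ hf, ratScale_one])

lemma scaleSub_scaleSub (r : ℕ) (f g : RatFunc ℂ) (U : Submodule ℂ (Fin r → RatFunc ℂ)) :
    scaleSub r f (scaleSub r g U) = scaleSub r (f * g) U := by
  rw [scaleSub, scaleSub, scaleSub, ratScale_mul, Submodule.map_comp]

lemma scaledPolySubmodule_mul (r : ℕ) (a c : ℂ[X]) :
    scaledPolySubmodule r (a * c) =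
      scaleSub r (algebraMap ℂ[X] (RatFunc ℂ) a) (scaledPolySubmodule r c) := by
  rw [scaledPolySubmodule, scaleSub_scaleSub, map_mul]

lemma polyToRat_mem_scaledPolySubmodule_iff {r : ℕ} {c : ℂ[X]} {v : Fin r → ℂ[X]} :
    polyToRat r v ∈ scaledPolySubmodule r c ↔ ∀ k, c ∣ v k := by
  constructor
  · rintro ⟨_, ⟨w, rfl⟩, hw⟩ k
    refine ⟨w k, RatFunc.algebraMap_injective ℂ ?_⟩
    rw [map_mul]
    exact (congrFun hw k).symm
  · intro hv
    choose w hw using hv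
    refine ⟨polyToRat r w, ⟨w, rfl⟩, funext fun k => ?_⟩
    show algebraMap ℂ[X] (RatFunc ℂ) c * algebraMap ℂ[X] (RatFunc ℂ) (w k) = _
    rw [← map_mul, ← hw k]
    rfl

lemma scaledPolySubmodule_le_polySubmodule (r : ℕ) (c : ℂ[X]) :
    scaledPolySubmodule r c ≤ polySubmodule r := by
  rintro _ ⟨_, ⟨u, rfl⟩, rfl⟩
  exact ⟨fun k => c * u k, funext fun k => map_mul (algebraMap ℂ[X] (RatFunc ℂ)) c (u k)⟩

noncomputable def polySubmoduleQuotientEquivPi (r : ℕ) (c : ℂ[X]) :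
    (polySubmodule r ⧸ comap (polySubmodule r).subtype (scaledPolySubmodule r c)) ≃ₗ[ℂ]
      (Fin r → ℂ[X] ⧸ Ideal.span {c}) :=
  let e : (Fin r → ℂ[X]) ≃ₗ[ℂ] polySubmodule r := .ofInjective (polyToRat r) fun u v h =>
    funext fun k => RatFunc.algebraMap_injective ℂ (congrFun h k)
  (Quotient.equiv _ (pi Set.univ fun _ => (Ideal.span {c}).restrictScalars ℂ) e.symm <| by
    rw [map_equiv_eq_comap_symm, LinearEquiv.symm_symm, ← comap_comp]
    ext v
    simp only [mem_comap, mem_pi, Set.mem_univ, true_implies, restrictScalars_mem,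
      Ideal.mem_span_singleton]
    exact polyToRat_mem_scaledPolySubmodule_iff) ≪≫ₗ quotientPi _ ≪≫ₗ
    .piCongrRight fun _ => Quotient.restrictScalarsEquiv ℂ (Ideal.span {c})

lemma finiteDimensional_polySubmodule_quotient (r : ℕ) {c : ℂ[X]} (hc : c ≠ 0) :
    FiniteDimensional ℂ
      (polySubmodule r ⧸ comap (polySubmodule r).subtype (scaledPolySubmodule r c)) :=
  have : Module.Finite ℂ (ℂ[X] ⧸ Ideal.span {c}) := (AdjoinRoot.powerBasis hc).finite
  (polySubmoduleQuotientEquivPi r c).symm.finiteDimensional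

lemma finrank_polySubmodule_quotient (r : ℕ) {c : ℂ[X]} (hc : c ≠ 0) :
    finrank ℂ (polySubmodule r ⧸ comap (polySubmodule r).subtype (scaledPolySubmodule r c)) =
      r * c.natDegree := by
  have : Module.Finite ℂ (ℂ[X] ⧸ Ideal.span {c}) := (AdjoinRoot.powerBasis hc).finite
  rw [(polySubmoduleQuotientEquivPi r c).finrank_eq, finrank_pi_fintype]
  simp [finrank_quotient_span_eq_natDegree]

lemma finrank_scaledPolySubmodule_quotient (r : ℕ) {a c : ℂ[X]} (ha : a ≠ 0) (hc : c ≠ 0) :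
    finrank ℂ (scaledPolySubmodule r a ⧸
      comap (scaledPolySubmodule r a).subtype (scaledPolySubmodule r (a * c))) =
      r * c.natDegree := by
  rw [scaledPolySubmodule_mul, ← finrank_polySubmodule_quotient r hc]
  exact (subquotientMapEquiv (ratScaleEquiv r (RatFunc.algebraMap_ne_zero ha)) _ _).finrank_eq.symm

lemma finiteDimensional_inv_polySubmodule_quotient (r : ℕ) {q p : ℂ[X]} (hq : q ≠ 0)
    (hp : p ≠ 0) :
    FiniteDimensional ℂ (scaleSub r (algebraMap ℂ[X] (RatFunc ℂ) q)⁻¹ (polySubmodule r) ⧸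
      comap (scaleSub r _ (polySubmodule r)).subtype (scaledPolySubmodule r p)) := by
  have hq' := RatFunc.algebraMap_ne_zero hq
  have hpq : scaledPolySubmodule r p =
      scaleSub r (algebraMap ℂ[X] (RatFunc ℂ) q)⁻¹ (scaledPolySubmodule r (q * p)) := by
    rw [scaledPolySubmodule, scaledPolySubmodule, scaleSub_scaleSub, map_mul,
      inv_mul_cancel_left₀ hq']
  rw [hpq]
  have := finiteDimensional_polySubmodule_quotient r (mul_ne_zero hq hp)
  exact (subquotientMapEquiv (ratScaleEquiv r (inv_ne_zero hq')) _ _).finiteDimensional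

noncomputable def vdim (r : ℕ) (W : Submodule ℂ (Fin r → RatFunc ℂ)) (p : ℂ[X]) : ℤ :=
  finrank ℂ (W ⧸ comap W.subtype (scaledPolySubmodule r p)) - r * p.natDegree

section VirtualDimension

variable {r : ℕ} {W : Submodule ℂ (Fin r → RatFunc ℂ)} {q : ℂ[X]}

lemma finiteDimensional_quotient_scaledPolySubmodule (hq : q ≠ 0)
    (hWq : W ≤ scaleSub r (algebraMap ℂ[X] (RatFunc ℂ) q)⁻¹ (polySubmodule r))
    {p : ℂ[X]} (hp : p ≠ 0) :
    FiniteDimensional ℂ (W ⧸ comap W.subtype (scaledPolySubmodule r p)) :=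
  have := finiteDimensional_inv_polySubmodule_quotient r hq hp
  .of_injective _ (mapQ_inclusion_injective _ hWq)

lemma vdim_mul (hq : q ≠ 0)
    (hWq : W ≤ scaleSub r (algebraMap ℂ[X] (RatFunc ℂ) q)⁻¹ (polySubmodule r))
    {p c : ℂ[X]} (hp : p ≠ 0) (hc : c ≠ 0) (hpW : scaledPolySubmodule r p ≤ W) :
    vdim r W (p * c) = vdim r W p := by
  have hle : scaledPolySubmodule r (p * c) ≤ scaledPolySubmodule r p := by
    rw [scaledPolySubmodule_mul]
    exact map_mono (scaledPolySubmodule_le_polySubmodule r c)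
  have := finiteDimensional_quotient_scaledPolySubmodule hq hWq (mul_ne_zero hp hc)
  rw [vdim, vdim, finrank_subquotient_add hle hpW, finrank_scaledPolySubmodule_quotient r hp hc,
    natDegree_mul hp hc]
  push_cast
  ring

end VirtualDimension

theorem vdim_independent_of_p_general (r : ℕ)
    (W : Submodule ℂ (Fin r → RatFunc ℂ)) (q p₁ p₂ : Polynomial ℂ)
    (hq : q ≠ 0) (hp₁ : p₁ ≠ 0) (hp₂ : p₂ ≠ 0)
    (hWq : W ≤ scaleSub r (algebraMap (Polynomial ℂ) (RatFunc ℂ) q)⁻¹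
      (polySubmodule r))
    (hp₁W : scaleSub r (algebraMap (Polynomial ℂ) (RatFunc ℂ) p₁)
      (polySubmodule r) ≤ W)
    (hp₂W : scaleSub r (algebraMap (Polynomial ℂ) (RatFunc ℂ) p₂)
      (polySubmodule r) ≤ W) :
    letI p₁P : Submodule ℂ (Fin r → RatFunc ℂ) :=
      scaleSub r (algebraMap (Polynomial ℂ) (RatFunc ℂ) p₁) (polySubmodule r)
    letI p₂P : Submodule ℂ (Fin r → RatFunc ℂ) :=
      scaleSub r (algebraMap (Polynomial ℂ) (RatFunc ℂ) p₂) (polySubmodule r)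
    FiniteDimensional ℂ (↥W ⧸ Submodule.comap W.subtype p₁P) ∧
    FiniteDimensional ℂ (↥W ⧸ Submodule.comap W.subtype p₂P) ∧
    (Module.finrank ℂ (↥W ⧸ Submodule.comap W.subtype p₁P) : ℤ)
        - (r : ℤ) * p₁.natDegree
      = (Module.finrank ℂ (↥W ⧸ Submodule.comap W.subtype p₂P) : ℤ)
        - (r : ℤ) * p₂.natDegree := by
  refine ⟨finiteDimensional_quotient_scaledPolySubmodule hq hWq hp₁,
    finiteDimensional_quotient_scaledPolySubmodule hq hWq hp₂, ?_⟩
  calc vdim r W p₁ = vdim r W (p₁ * p₂) := (vdim_mul hq hWq hp₁ hp₂ hp₁W).symm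
    _ = vdim r W (p₂ * p₁) := by rw [mul_comm]
    _ = vdim r W p₂ := vdim_mul hq hWq hp₂ hp₁ hp₂W

/-- if `W ⊆ q⁻¹·P^r` and `p₁·P^r ⊆ W`, `p₂·P^r ⊆ W` for nonzero
polynomials `p₁, p₂`, then both quotients `W ⧸ pᵢ·P^r` are finite-dimensional
and `finrank (W ⧸ p₁·P^r) − r·deg p₁ = finrank (W ⧸ p₂·P^r) − r·deg p₂`;
the virtual dimension of `W` does not depend on the choice of `p`. -/
theorem vdim_independent_of_p (r : ℕ) (hr : 1 ≤ r)
    (W : Submodule ℂ (Fin r → RatFunc ℂ)) (q p₁ p₂ : Polynomial ℂ)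
    (hq : q ≠ 0) (hp₁ : p₁ ≠ 0) (hp₂ : p₂ ≠ 0)
    (hWq : W ≤ scaleSub r (algebraMap (Polynomial ℂ) (RatFunc ℂ) q)⁻¹
      (polySubmodule r))
    (hp₁W : scaleSub r (algebraMap (Polynomial ℂ) (RatFunc ℂ) p₁)
      (polySubmodule r) ≤ W)
    (hp₂W : scaleSub r (algebraMap (Polynomial ℂ) (RatFunc ℂ) p₂)
      (polySubmodule r) ≤ W) :
    letI p₁P : Submodule ℂ (Fin r → RatFunc ℂ) :=
      scaleSub r (algebraMap (Polynomial ℂ) (RatFunc ℂ) p₁) (polySubmodule r)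
    letI p₂P : Submodule ℂ (Fin r → RatFunc ℂ) :=
      scaleSub r (algebraMap (Polynomial ℂ) (RatFunc ℂ) p₂) (polySubmodule r)
    FiniteDimensional ℂ (↥W ⧸ Submodule.comap W.subtype p₁P) ∧
    FiniteDimensional ℂ (↥W ⧸ Submodule.comap W.subtype p₂P) ∧
    (Module.finrank ℂ (↥W ⧸ Submodule.comap W.subtype p₁P) : ℤ)
        - (r : ℤ) * p₁.natDegree
      = (Module.finrank ℂ (↥W ⧸ Submodule.comap W.subtype p₂P) : ℤ)
        - (r : ℤ) * p₂.natDegree :=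
  vdim_independent_of_p_general r W q p₁ p₂ hq hp₁ hp₂ hWq hp₁W hp₂W
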